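/- arXiv:2309.08723 — 7 statements merged into one kernel-verified Lean document; each statement's English description precedes it below -/
import Mathlib

section
/- Let Q₊ be a finite set, q ∈ Q₊, and let f : Q₋ →. Q₊ be an injective partial function from a finite set Q₋ with q ∉ Im f, and let δ : Q₊ →. Q₋ be an injective partial function. Then the sequence defined by q₁ = q, q_{i+1} = f(δ(q_i)) (whenever defined) contains no repeated elements; in particular it is finite. -/
/-- For an injective partial function `f : Q₋ →. Q₊` with `q ∉ Im f`, and an
injective partial function `δ : Q₊ →. Q₋`, the sequence `q₁ = q`,
`q_{i+1} = f(δ(q_i))` (when defined) has no repeated elements; in particular,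
if `Q₊` is finite, the sequence terminates within `|Q₊|` steps. -/
theorem stmt3 {Qp Qm : Type*} [Fintype Qp]
    (q : Qp) (f : Qm → Option Qp) (δ : Qp → Option Qm)
    (hf : ∀ x y a, f x = some a → f y = some a → x = y)
    (hδ : ∀ x y a, δ x = some a → δ y = some a → x = y)
    (hq : ∀ r, f r ≠ some q)
    (seq : ℕ → Option Qp)
    (h0 : seq 0 = some q)
    (hs : ∀ n, seq (n + 1) = (seq n).bind fun p => (δ p).bind f) :
    (∀ i j x, seq i = some x → seq j = some x → i = j) ∧
      ∃ i, i ≤ Fintype.card Qp ∧ seq i = none := by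
  -- unfold a successor step
  have hstep : ∀ n x, seq (n + 1) = some x →
      ∃ p a, seq n = some p ∧ δ p = some a ∧ f a = some x := by
    intro n x h
    rw [hs n] at h
    cases hp : seq n with
    | none => simp [hp] at h
    | some p =>
      rw [hp, Option.bind_some] at h
      cases ha : δ p with
      | none => simp [ha] at h
      | some a =>
        rw [ha, Option.bind_some] at h
        exact ⟨p, a, rfl, ha, h⟩
  -- q never reoccurs
  have hnq : ∀ n, seq (n + 1) ≠ some q := by
    intro n h
    obtain ⟨p, a, _, _, hfa⟩ := hstep n q h
    exact hq a hfa
  -- injectivity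
  have hinj : ∀ i j x, seq i = some x → seq j = some x → i = j := by
    intro i
    induction i with
    | zero =>
      intro j x hi hj
      cases j with
      | zero => rfl
      | succ j' =>
        rw [h0] at hi
        injection hi with hi
        subst hi
        exact absurd hj (hnq j')
    | succ i' ih =>
      intro j x hi hj
      cases j with
      | zero =>
        rw [h0] at hj
        injection hj with hj
        subst hj
        exact absurd hi (hnq i')
      | succ j' =>
        obtain ⟨p, a, hp, ha, hfa⟩ := hstep i' x hi
        obtain ⟨p', a', hp', ha', hfa'⟩ := hstep j' x hj
        have : a = a' := hf a a' x hfa hfa'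
        subst this
        have : p = p' := hδ p p' a ha ha'
        subst this
        rw [ih j' p hp hp']
  refine ⟨hinj, ?_⟩
  by_contra h
  push_neg at h
  have hsome : ∀ i : Fin (Fintype.card Qp + 1), ∃ x, seq i = some x := by
    intro i
    have := h i (Nat.lt_succ_iff.mp i.isLt)
    cases hx : seq i with
    | none => exact absurd hx this
    | some x => exact ⟨x, rfl⟩
  choose g hg using hsome
  have : Function.Injective g := by
    intro i j hij
    have := hinj i j (g i) (hg i) (hij ▸ hg j)
    exact Fin.ext this
  have := Fintype.card_le_of_injective g this
  simp at this
end

section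
/- For every n ≥ 8, the maximum of G(k, ℓ, m) = k · C(ℓ, m) · C(k−1, ℓ−m) · (ℓ−m)! over triples (k, ℓ, m) with k + ℓ = n, k ≥ 1, m ≤ ℓ, and m ≥ ℓ − k + 1 is attained at some triple with k > ℓ. -/
/-- `G k l m = k·C(l,m)·C(k-1,l-m)·(l-m)!`. -/
def G (k l m : ℕ) : ℕ := k * l.choose m * (k - 1).choose (l - m) * (l - m).factorial

/-- `F n` is the maximum of `G k l m` over admissible triples with `k + l = n`:
`k ≥ 1`, `m ≤ l`, and `m ≥ l - k + 1` (stated as `l + 1 ≤ m + k`). -/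
def F (n : ℕ) : ℕ :=
  ((Finset.range (n + 1)) ×ˢ (Finset.range (n + 1)) ×ˢ (Finset.range (n + 1))).sup
    fun t => if t.1 + t.2.1 = n ∧ 1 ≤ t.1 ∧ t.2.2 ≤ t.2.1 ∧ t.2.1 + 1 ≤ t.2.2 + t.1
      then G t.1 t.2.1 t.2.2 else 0

lemma G_le_F (n k l m : ℕ) (h1 : k + l = n) (h2 : 1 ≤ k) (h3 : m ≤ l)
    (h4 : l + 1 ≤ m + k) : G k l m ≤ F n := by
  have hmem : ((k, l, m) : ℕ × ℕ × ℕ) ∈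
      ((Finset.range (n + 1)) ×ˢ (Finset.range (n + 1)) ×ˢ (Finset.range (n + 1))) := by
    simp only [Finset.mem_product, Finset.mem_range]
    omega
  have h := Finset.le_sup (f := fun t : ℕ × ℕ × ℕ =>
      if t.1 + t.2.1 = n ∧ 1 ≤ t.1 ∧ t.2.2 ≤ t.2.1 ∧ t.2.1 + 1 ≤ t.2.2 + t.1
      then G t.1 t.2.1 t.2.2 else 0) hmem
  rw [F]
  refine le_trans ?_ h
  show G k l m ≤ if k + l = n ∧ 1 ≤ k ∧ m ≤ l ∧ l + 1 ≤ m + k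
      then G k l m else 0
  rw [if_pos ⟨h1, h2, h3, h4⟩]

/-- Swapping `k` and `l` (with the matched `m`) does not decrease `G` when `k ≤ l`. -/
lemma G_swap_le (k l m : ℕ) (hk : 1 ≤ k) (hkl : k ≤ l) (hm : m ≤ l)
    (hadm : l + 1 ≤ m + k) : G k l m ≤ G l k (m + k - l) := by
  obtain ⟨a, rfl⟩ : ∃ a, k = a + 1 := ⟨k - 1, by omega⟩
  obtain ⟨b, rfl⟩ : ∃ b, l = b + 1 := ⟨l - 1, by omega⟩
  set d := b + 1 - m with hd
  have hda : d ≤ a := by omega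
  have hsub1 : m + (a + 1) - (b + 1) = (a + 1) - d := by omega
  have hsub2 : (a + 1) - ((a + 1) - d) = d := by omega
  have hsub3 : (b + 1) - d = m := by omega
  unfold G
  rw [hsub1, hsub2]
  simp only [Nat.add_sub_cancel]
  rw [show (a + 1).choose ((a + 1) - d) = (a + 1).choose d from
    Nat.choose_symm (by omega : d ≤ a + 1)]
  rw [show (b + 1).choose m = (b + 1).choose d by
    rw [← hsub3, Nat.choose_symm (by omega : d ≤ b + 1)]]
  rw [← hd]
  apply Nat.mul_le_mul_right
  have h1 := Nat.choose_mul_succ_eq a d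
  have h2 := Nat.choose_mul_succ_eq b d
  calc (a + 1) * (b + 1).choose d * a.choose d
      = (b + 1).choose d * (a.choose d * (a + 1)) := by ring
    _ = (b + 1).choose d * ((a + 1).choose d * (a + 1 - d)) := by rw [h1]
    _ = (b + 1).choose d * (a + 1).choose d * (a + 1 - d) := by ring
    _ ≤ (b + 1).choose d * (a + 1).choose d * (b + 1 - d) :=
        Nat.mul_le_mul_left _ (by omega)
    _ = (a + 1).choose d * ((b + 1).choose d * (b + 1 - d)) := by ring
    _ = (a + 1).choose d * (b.choose d * (b + 1)) := by rw [← h2]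
    _ = (b + 1) * (a + 1).choose d * b.choose d := by ring

/-- In the diagonal case `k = l` one can strictly improve by moving to
`(k+1, k-1, m-1)`: exact identity `(k+1)·G k k m = k·G (k+1) (k-1) (m-1)`. -/
lemma G_diag_le (k m : ℕ) (hk : 1 ≤ k) (hm1 : 1 ≤ m) (hm2 : m ≤ k) :
    G k k m ≤ G (k + 1) (k - 1) (m - 1) := by
  obtain ⟨a, rfl⟩ : ∃ a, k = a + 1 := ⟨k - 1, by omega⟩
  obtain ⟨c, rfl⟩ : ∃ c, m = c + 1 := ⟨m - 1, by omega⟩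
  have hca : c ≤ a := by omega
  have key : (a + 2) * G (a + 1) (a + 1) (c + 1) = (a + 1) * G (a + 2) a c := by
    unfold G
    simp only [Nat.add_sub_cancel, show a + 1 + 1 - 1 = a + 1 by omega,
      show a + 1 - (c + 1) = a - c by omega]
    have h1 := Nat.add_one_mul_choose_eq a c
    have h2 := Nat.choose_mul_succ_eq a (a - c)
    have hsub : a + 1 - (a - c) = c + 1 := by omega
    rw [hsub] at h2
    calc (a + 2) * ((a + 1) * (a + 1).choose (c + 1) * a.choose (a - c)
          * (a - c).factorial)
        = (a + 2) * ((a + 1).choose (c + 1) * (a.choose (a - c) * (a + 1))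
          * (a - c).factorial) := by ring
      _ = (a + 2) * ((a + 1).choose (c + 1) * ((a + 1).choose (a - c) * (c + 1))
          * (a - c).factorial) := by rw [h2]
      _ = (a + 2) * (((a + 1).choose (c + 1) * (c + 1)) * (a + 1).choose (a - c)
          * (a - c).factorial) := by ring
      _ = (a + 2) * (((a + 1) * a.choose c) * (a + 1).choose (a - c)
          * (a - c).factorial) := by rw [← h1]
      _ = (a + 1) * ((a + 2) * a.choose c * (a + 1).choose (a - c)
          * (a - c).factorial) := by ring
  have hle : (a + 2) * G (a + 1) (a + 1) (c + 1)
      ≤ (a + 2) * G (a + 2) a c := by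
    rw [key]
    exact Nat.mul_le_mul_right _ (by omega)
  have := Nat.le_of_mul_le_mul_left hle (by omega)
  simpa using this

/-- For every `n ≥ 8`, the maximum `F n` is attained at some admissible triple
with `k > l`. -/
theorem stmt7 (n : ℕ) (hn : 8 ≤ n) :
    ∃ k l m : ℕ, k + l = n ∧ 1 ≤ k ∧ m ≤ l ∧ l + 1 ≤ m + k ∧ l < k ∧
      G k l m = F n := by
  -- F n is positive thanks to the triple (n, 0, 0)
  have hGn : G n 0 0 = n := by simp [G]
  have hFpos : 0 < F n := by
    have := G_le_F n n 0 0 (by omega) (by omega) le_rfl (by omega)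
    omega
  -- the sup is attained
  obtain ⟨t, ht, hsup⟩ := Finset.exists_mem_eq_sup
    ((Finset.range (n + 1)) ×ˢ (Finset.range (n + 1)) ×ˢ (Finset.range (n + 1)))
    ⟨(0, 0, 0), by simp⟩
    (fun t : ℕ × ℕ × ℕ =>
      if t.1 + t.2.1 = n ∧ 1 ≤ t.1 ∧ t.2.2 ≤ t.2.1 ∧ t.2.1 + 1 ≤ t.2.2 + t.1
      then G t.1 t.2.1 t.2.2 else 0)
  obtain ⟨k, l, m⟩ := t
  have hFeq : F n = if k + l = n ∧ 1 ≤ k ∧ m ≤ l ∧ l + 1 ≤ m + k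
      then G k l m else 0 := hsup
  by_cases hcond : k + l = n ∧ 1 ≤ k ∧ m ≤ l ∧ l + 1 ≤ m + k
  · obtain ⟨h1, h2, h3, h4⟩ := hcond
    rw [if_pos ⟨h1, h2, h3, h4⟩] at hFeq
    rcases lt_trichotomy l k with hlk | hlk | hlk
    · exact ⟨k, l, m, h1, h2, h3, h4, hlk, hFeq.symm⟩
    · -- diagonal case k = l
      subst hlk
      have hm1 : 1 ≤ m := by omega
      have hle := G_diag_le l m h2 hm1 h3
      have hle2 := G_le_F n (l + 1) (l - 1) (m - 1) (by omega) (by omega)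
        (by omega) (by omega)
      refine ⟨l + 1, l - 1, m - 1, by omega, by omega, by omega, by omega,
        by omega, le_antisymm hle2 ?_⟩
      rw [hFeq]
      exact hle
    · -- k < l : swap
      have hle := G_swap_le k l m h2 (le_of_lt hlk) h3 h4
      have hle2 := G_le_F n l k (m + k - l) (by omega) (by omega) (by omega)
        (by omega)
      refine ⟨l, k, m + k - l, by omega, by omega, by omega, by omega, hlk,
        le_antisymm hle2 ?_⟩
      rw [hFeq]
      exact hle
  · rw [if_neg hcond] at hFeq
    omega
end

section
/- For every n ≥ 8, the maximum of G(k, ℓ, m) = k · C(ℓ, m) · C(k−1, ℓ−m) · (ℓ−m)! over admissible triples with k + ℓ = n is attained at k = ⌊(n+2)/2⌋ and ℓ = ⌈(n−2)/2⌉ (for some value of m). -/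
/-- Normal form: with `l = m + j` and `k = j + b + 1`,
`G k l m * (j! * m! * b!) = k! * l!`. -/
lemma G_eq (k l m j b : ℕ) (h1 : l = m + j) (h2 : k = j + b + 1) :
    G k l m * (j.factorial * m.factorial * b.factorial) =
      k.factorial * l.factorial := by
  subst h1 h2
  have e1 : j + b + 1 - 1 = j + b := by omega
  have e2 : m + j - m = j := by omega
  have hc1 : (m + j).choose m * m.factorial * j.factorial = (m + j).factorial := by
    have := Nat.choose_mul_factorial_mul_factorial (Nat.le_add_right m j)
    simpa [e2] using this
  have hc2 : (j + b).choose j * j.factorial * b.factorial = (j + b).factorial := by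
    have := Nat.choose_mul_factorial_mul_factorial (Nat.le_add_right j b)
    simpa using this
  calc G (j + b + 1) (m + j) m * (j.factorial * m.factorial * b.factorial)
      = (j + b + 1) * (m + j).choose m * (j + b).choose j * j.factorial *
          (j.factorial * m.factorial * b.factorial) := by
        simp only [G, e1, e2]
    _ = (j + b + 1) * ((m + j).choose m * m.factorial * j.factorial) *
          ((j + b).choose j * j.factorial * b.factorial) := by ring
    _ = (j + b + 1) * (m + j).factorial * (j + b).factorial := by rw [hc1, hc2]
    _ = (j + b + 1).factorial * (m + j).factorial := by
        rw [Nat.factorial_succ]; ring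

lemma step_up (b m j : ℕ) (hb : b ≤ m) :
    G (j + b + 1) (m + j + 1) (m + 1) ≤ G (j + b + 2) (m + j) m := by
  have id1 : G (j + b + 1) (m + j + 1) (m + 1) *
      (j.factorial * (m + 1).factorial * b.factorial) =
      (j + b + 1).factorial * (m + j + 1).factorial :=
    G_eq _ _ _ j b (by omega) (by omega)
  have id2 : G (j + b + 2) (m + j) m *
      (j.factorial * m.factorial * (b + 1).factorial) =
      (j + b + 2).factorial * (m + j).factorial :=
    G_eq _ _ _ j (b + 1) (by omega) (by omega)
  have e1 : G (j + b + 1) (m + j + 1) (m + 1) *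
      (j.factorial * (m + 1).factorial * (b + 1).factorial) =
      (b + 1) * ((j + b + 1).factorial * (m + j + 1).factorial) := by
    calc G (j + b + 1) (m + j + 1) (m + 1) *
        (j.factorial * (m + 1).factorial * (b + 1).factorial)
        = G (j + b + 1) (m + j + 1) (m + 1) *
            (j.factorial * (m + 1).factorial * b.factorial) * (b + 1) := by
          rw [Nat.factorial_succ b]; ring
      _ = (j + b + 1).factorial * (m + j + 1).factorial * (b + 1) := by rw [id1]
      _ = _ := by ring
  have e2 : G (j + b + 2) (m + j) m *
      (j.factorial * (m + 1).factorial * (b + 1).factorial) =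
      (m + 1) * ((j + b + 2).factorial * (m + j).factorial) := by
    calc G (j + b + 2) (m + j) m *
        (j.factorial * (m + 1).factorial * (b + 1).factorial)
        = G (j + b + 2) (m + j) m *
            (j.factorial * m.factorial * (b + 1).factorial) * (m + 1) := by
          rw [Nat.factorial_succ m]; ring
      _ = (j + b + 2).factorial * (m + j).factorial * (m + 1) := by rw [id2]
      _ = _ := by ring
  have key : (b + 1) * (m + j + 1) ≤ (m + 1) * (j + b + 2) := by
    have hjb : j * b ≤ j * m := Nat.mul_le_mul_left j hb
    nlinarith [hjb]
  have hcmp : (b + 1) * ((j + b + 1).factorial * (m + j + 1).factorial) ≤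
      (m + 1) * ((j + b + 2).factorial * (m + j).factorial) := by
    have f1 : (m + j + 1).factorial = (m + j + 1) * (m + j).factorial :=
      Nat.factorial_succ _
    have f2 : (j + b + 2).factorial = (j + b + 2) * (j + b + 1).factorial := by
      have : j + b + 2 = (j + b + 1) + 1 := by omega
      rw [this, Nat.factorial_succ]
    rw [f1, f2]
    calc (b + 1) * ((j + b + 1).factorial * ((m + j + 1) * (m + j).factorial))
        = ((b + 1) * (m + j + 1)) * ((j + b + 1).factorial * (m + j).factorial) := by
          ring
      _ ≤ ((m + 1) * (j + b + 2)) * ((j + b + 1).factorial * (m + j).factorial) :=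
          Nat.mul_le_mul_right _ key
      _ = (m + 1) * ((j + b + 2) * (j + b + 1).factorial * (m + j).factorial) := by
          ring
  rw [← e1, ← e2] at hcmp
  exact Nat.le_of_mul_le_mul_right hcmp
    (by positivity)

lemma step_down1 (e m j : ℕ) (hD : m + 1 ≤ j * e + j) :
    G (j + m + e + 3) (m + j) m ≤ G (j + m + e + 2) (m + j + 1) (m + 1) := by
  have id1 : G (j + m + e + 3) (m + j) m *
      (j.factorial * m.factorial * (m + e + 2).factorial) =
      (j + m + e + 3).factorial * (m + j).factorial :=
    G_eq _ _ _ j (m + e + 2) (by omega) (by omega)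
  have id2 : G (j + m + e + 2) (m + j + 1) (m + 1) *
      (j.factorial * (m + 1).factorial * (m + e + 1).factorial) =
      (j + m + e + 2).factorial * (m + j + 1).factorial :=
    G_eq _ _ _ j (m + e + 1) (by omega) (by omega)
  have e1 : G (j + m + e + 3) (m + j) m *
      (j.factorial * (m + 1).factorial * (m + e + 2).factorial) =
      (m + 1) * ((j + m + e + 3).factorial * (m + j).factorial) := by
    calc G (j + m + e + 3) (m + j) m *
        (j.factorial * (m + 1).factorial * (m + e + 2).factorial)
        = G (j + m + e + 3) (m + j) m *
            (j.factorial * m.factorial * (m + e + 2).factorial) * (m + 1) := by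
          rw [Nat.factorial_succ m]; ring
      _ = (j + m + e + 3).factorial * (m + j).factorial * (m + 1) := by rw [id1]
      _ = _ := by ring
  have e2 : G (j + m + e + 2) (m + j + 1) (m + 1) *
      (j.factorial * (m + 1).factorial * (m + e + 2).factorial) =
      (m + e + 2) * ((j + m + e + 2).factorial * (m + j + 1).factorial) := by
    have f : (m + e + 2).factorial = (m + e + 2) * (m + e + 1).factorial := by
      have : m + e + 2 = (m + e + 1) + 1 := by omega
      rw [this, Nat.factorial_succ]
    calc G (j + m + e + 2) (m + j + 1) (m + 1) *
        (j.factorial * (m + 1).factorial * (m + e + 2).factorial)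
        = G (j + m + e + 2) (m + j + 1) (m + 1) *
            (j.factorial * (m + 1).factorial * (m + e + 1).factorial) * (m + e + 2) := by
          rw [f]; ring
      _ = (j + m + e + 2).factorial * (m + j + 1).factorial * (m + e + 2) := by rw [id2]
      _ = _ := by ring
  have key : (m + 1) * (j + m + e + 3) ≤ (m + e + 2) * (m + j + 1) := by nlinarith [hD]
  have hcmp : (m + 1) * ((j + m + e + 3).factorial * (m + j).factorial) ≤
      (m + e + 2) * ((j + m + e + 2).factorial * (m + j + 1).factorial) := by
    have f1 : (j + m + e + 3).factorial = (j + m + e + 3) * (j + m + e + 2).factorial := by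
      have : j + m + e + 3 = (j + m + e + 2) + 1 := by omega
      rw [this, Nat.factorial_succ]
    have f2 : (m + j + 1).factorial = (m + j + 1) * (m + j).factorial :=
      Nat.factorial_succ _
    rw [f1, f2]
    calc (m + 1) * ((j + m + e + 3) * (j + m + e + 2).factorial * (m + j).factorial)
        = ((m + 1) * (j + m + e + 3)) * ((j + m + e + 2).factorial * (m + j).factorial) := by
          ring
      _ ≤ ((m + e + 2) * (m + j + 1)) * ((j + m + e + 2).factorial * (m + j).factorial) :=
          Nat.mul_le_mul_right _ key
      _ = _ := by ring
  rw [← e1, ← e2] at hcmp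
  exact Nat.le_of_mul_le_mul_right hcmp (by positivity)

lemma step_down2 (e m j : ℕ) (hD : j * e + j ≤ m) (hk : 1 ≤ j + m + e) :
    G (j + m + e + 3) (m + j) m ≤ G (j + m + e + 2) (m + j + 1) m := by
  have id1 : G (j + m + e + 3) (m + j) m *
      (j.factorial * m.factorial * (m + e + 2).factorial) =
      (j + m + e + 3).factorial * (m + j).factorial :=
    G_eq _ _ _ j (m + e + 2) (by omega) (by omega)
  have id2 : G (j + m + e + 2) (m + j + 1) m *
      ((j + 1).factorial * m.factorial * (m + e).factorial) =
      (j + m + e + 2).factorial * (m + j + 1).factorial :=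
    G_eq _ _ _ (j + 1) (m + e) (by omega) (by omega)
  have e1 : G (j + m + e + 3) (m + j) m *
      ((j + 1).factorial * m.factorial * (m + e + 2).factorial) =
      (j + 1) * ((j + m + e + 3).factorial * (m + j).factorial) := by
    calc G (j + m + e + 3) (m + j) m *
        ((j + 1).factorial * m.factorial * (m + e + 2).factorial)
        = G (j + m + e + 3) (m + j) m *
            (j.factorial * m.factorial * (m + e + 2).factorial) * (j + 1) := by
          rw [Nat.factorial_succ j]; ring
      _ = (j + m + e + 3).factorial * (m + j).factorial * (j + 1) := by rw [id1]
      _ = _ := by ring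
  have e2 : G (j + m + e + 2) (m + j + 1) m *
      ((j + 1).factorial * m.factorial * (m + e + 2).factorial) =
      ((m + e + 2) * (m + e + 1)) *
        ((j + m + e + 2).factorial * (m + j + 1).factorial) := by
    have f : (m + e + 2).factorial = (m + e + 2) * ((m + e + 1) * (m + e).factorial) := by
      have h1 : m + e + 2 = (m + e + 1) + 1 := by omega
      rw [h1, Nat.factorial_succ, Nat.factorial_succ]
    calc G (j + m + e + 2) (m + j + 1) m *
        ((j + 1).factorial * m.factorial * (m + e + 2).factorial)
        = G (j + m + e + 2) (m + j + 1) m *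
            ((j + 1).factorial * m.factorial * (m + e).factorial) *
            ((m + e + 2) * (m + e + 1)) := by rw [f]; ring
      _ = (j + m + e + 2).factorial * (m + j + 1).factorial *
            ((m + e + 2) * (m + e + 1)) := by rw [id2]
      _ = _ := by ring
  have key : (j + 1) * (j + m + e + 3) ≤
      ((m + e + 2) * (m + e + 1)) * (m + j + 1) := by
    have hjm : j ≤ m := by
      have := hD; nlinarith [Nat.zero_le (j * e)]
    have hme : 1 ≤ m + e := by omega
    have h2 : j + m + e + 3 ≤ (m + e + 1) * (m + e + 2) := by
      nlinarith [hjm, hme, sq_nonneg (m + e)]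
    calc (j + 1) * (j + m + e + 3)
        ≤ (m + j + 1) * ((m + e + 1) * (m + e + 2)) :=
          Nat.mul_le_mul (by omega) h2
      _ = ((m + e + 2) * (m + e + 1)) * (m + j + 1) := by ring
  have hcmp : (j + 1) * ((j + m + e + 3).factorial * (m + j).factorial) ≤
      ((m + e + 2) * (m + e + 1)) *
        ((j + m + e + 2).factorial * (m + j + 1).factorial) := by
    have f1 : (j + m + e + 3).factorial = (j + m + e + 3) * (j + m + e + 2).factorial := by
      have : j + m + e + 3 = (j + m + e + 2) + 1 := by omega
      rw [this, Nat.factorial_succ]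
    have f2 : (m + j + 1).factorial = (m + j + 1) * (m + j).factorial :=
      Nat.factorial_succ _
    rw [f1, f2]
    calc (j + 1) * ((j + m + e + 3) * (j + m + e + 2).factorial * (m + j).factorial)
        = ((j + 1) * (j + m + e + 3)) * ((j + m + e + 2).factorial * (m + j).factorial) := by
          ring
      _ ≤ (((m + e + 2) * (m + e + 1)) * (m + j + 1)) *
            ((j + m + e + 2).factorial * (m + j).factorial) :=
          Nat.mul_le_mul_right _ key
      _ = _ := by ring
  rw [← e1, ← e2] at hcmp
  exact Nat.le_of_mul_le_mul_right hcmp (by positivity)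

lemma dominate (n : ℕ) (hn : 8 ≤ n) :
    ∀ d k l m, (n + 2) / 2 - k + (k - (n + 2) / 2) ≤ d → k + l = n → 1 ≤ k →
      m ≤ l → l + 1 ≤ m + k →
      ∃ m', m' ≤ (n - 1) / 2 ∧ G k l m ≤ G ((n + 2) / 2) ((n - 1) / 2) m' := by
  intro d
  induction d with
  | zero =>
    intro k l m hd h1 h2 h3 h4
    have hk : k = (n + 2) / 2 := by omega
    have hl : l = (n - 1) / 2 := by omega
    subst hk; subst hl
    exact ⟨m, h3, le_rfl⟩
  | succ d ih =>
    intro k l m hd h1 h2 h3 h4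
    by_cases hk0 : k = (n + 2) / 2
    · have hl : l = (n - 1) / 2 := by omega
      subst hk0; subst hl
      exact ⟨m, h3, le_rfl⟩
    rcases le_or_gt k l with hkl | hkl
    · -- step up
      have hm1 : 1 ≤ m := by omega
      set j := l - m with hj
      set b := k - 1 - j with hbdef
      set m1 := m - 1 with hm1def
      have hb : b ≤ m1 := by omega
      have hstep : G k l m ≤ G (k + 1) (l - 1) (m - 1) := by
        have h := step_up b m1 j hb
        have g1 : G k l m = G (j + b + 1) (m1 + j + 1) (m1 + 1) := by
          rw [show k = j + b + 1 by omega, show l = m1 + j + 1 by omega,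
            show m = m1 + 1 by omega]
        have g2 : G (k + 1) (l - 1) (m - 1) = G (j + b + 2) (m1 + j) m1 := by
          rw [show k + 1 = j + b + 2 by omega, show l - 1 = m1 + j by omega,
            show m - 1 = m1 by omega]
        rw [g1, g2]; exact h
      have hklt : k < (n + 2) / 2 := by omega
      obtain ⟨m', hm', hle⟩ := ih (k + 1) (l - 1) (m - 1) (by omega) (by omega)
        (by omega) (by omega) (by omega)
      exact ⟨m', hm', le_trans hstep hle⟩
    · rcases le_or_gt (l + 3) k with hk3 | hk3
      · -- step down
        have hkgt : (n + 2) / 2 < k := by omega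
        set j := l - m with hj
        set e := k - l - 3 with hedef
        by_cases hD : m + 1 ≤ j * e + j
        · have hstep : G k l m ≤ G (k - 1) (l + 1) (m + 1) := by
            have h := step_down1 e m j hD
            have g1 : G k l m = G (j + m + e + 3) (m + j) m := by
              rw [show k = j + m + e + 3 by omega, show l = m + j by omega]
            have g2 : G (k - 1) (l + 1) (m + 1) = G (j + m + e + 2) (m + j + 1) (m + 1) := by
              rw [show k - 1 = j + m + e + 2 by omega, show l + 1 = m + j + 1 by omega]
            rw [g1, g2]; exact h
          obtain ⟨m', hm', hle⟩ := ih (k - 1) (l + 1) (m + 1) (by omega) (by omega)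
            (by omega) (by omega) (by omega)
          exact ⟨m', hm', le_trans hstep hle⟩
        · have hD' : j * e + j ≤ m := by omega
          have hk1 : 1 ≤ j + m + e := by omega
          have hstep : G k l m ≤ G (k - 1) (l + 1) m := by
            have h := step_down2 e m j hD' hk1
            have g1 : G k l m = G (j + m + e + 3) (m + j) m := by
              rw [show k = j + m + e + 3 by omega, show l = m + j by omega]
            have g2 : G (k - 1) (l + 1) m = G (j + m + e + 2) (m + j + 1) m := by
              rw [show k - 1 = j + m + e + 2 by omega, show l + 1 = m + j + 1 by omega]
            rw [g1, g2]; exact h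
          obtain ⟨m', hm', hle⟩ := ih (k - 1) (l + 1) m (by omega) (by omega)
            (by omega) (by omega) (by omega)
          exact ⟨m', hm', le_trans hstep hle⟩
      · -- l + 1 ≤ k ≤ l + 2 forces k = (n+2)/2
        exact absurd (by omega : k = (n + 2) / 2) hk0

/-- For every `n ≥ 8`, the maximum `F n` is attained at `k = ⌊(n+2)/2⌋` and
`l = ⌈(n-2)/2⌉ = (n-1)/2`, for some admissible `m`. -/
theorem stmt8 (n : ℕ) (hn : 8 ≤ n) :
    ∃ m : ℕ, m ≤ (n - 1) / 2 ∧ (n - 1) / 2 + 1 ≤ m + (n + 2) / 2 ∧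
      G ((n + 2) / 2) ((n - 1) / 2) m = F n := by
  obtain ⟨ms, hmem, hmax⟩ := Finset.exists_max_image (Finset.range ((n - 1) / 2 + 1))
    (fun m => G ((n + 2) / 2) ((n - 1) / 2) m) ⟨0, by simp⟩
  have hms : ms ≤ (n - 1) / 2 := by
    have := Finset.mem_range.mp hmem; omega
  refine ⟨ms, hms, by omega, le_antisymm ?_ ?_⟩
  · -- G ... ms ≤ F n
    have hmem2 : (((n + 2) / 2, (n - 1) / 2, ms) :
        ℕ × ℕ × ℕ) ∈ (Finset.range (n + 1)) ×ˢ (Finset.range (n + 1)) ×ˢ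
          (Finset.range (n + 1)) := by
      simp only [Finset.mem_product, Finset.mem_range]
      omega
    have hcond : (n + 2) / 2 + (n - 1) / 2 = n ∧ 1 ≤ (n + 2) / 2 ∧
        ms ≤ (n - 1) / 2 ∧ (n - 1) / 2 + 1 ≤ ms + (n + 2) / 2 := by omega
    have hle := Finset.le_sup (f := fun t : ℕ × ℕ × ℕ =>
      if t.1 + t.2.1 = n ∧ 1 ≤ t.1 ∧ t.2.2 ≤ t.2.1 ∧ t.2.1 + 1 ≤ t.2.2 + t.1
        then G t.1 t.2.1 t.2.2 else 0) hmem2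
    rw [F]
    exact le_trans (le_of_eq (if_pos hcond).symm) hle
  · -- F n ≤ G ... ms
    rw [F]
    apply Finset.sup_le
    intro t ht
    by_cases hcond : t.1 + t.2.1 = n ∧ 1 ≤ t.1 ∧ t.2.2 ≤ t.2.1 ∧ t.2.1 + 1 ≤ t.2.2 + t.1
    · rw [if_pos hcond]
      obtain ⟨h1, h2, h3, h4⟩ := hcond
      obtain ⟨m', hm', hle⟩ := dominate n hn
        ((n + 2) / 2 - t.1 + (t.1 - (n + 2) / 2)) t.1 t.2.1 t.2.2 le_rfl h1 h2 h3 h4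
      exact le_trans hle (hmax m' (Finset.mem_range.mpr (by omega)))
    · rw [if_neg hcond]
      exact Nat.zero_le _
end

section
/- For fixed k ≥ 1 and ℓ ≥ 0 with ℓ approximately equal to k (specifically with 0 ≤ k − ℓ ≤ 2), the value of m ≥ max(0, ℓ − k + 1) maximizing G(k, ℓ, m) = k · C(ℓ, m) · C(k−1, ℓ−m) · (ℓ−m)! is m_opt = ⌈(√D + ℓ − k − 2)/2⌉ where D = (k − ℓ)² + 4(ℓ + 1), provided this value is in the admissible range. -/
lemma keyZ (k l m : ℕ) (hk : 1 ≤ k) (hlk : l ≤ k) (hm : m < l) :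
    ((m:ℤ)+1) * ((m:ℤ)+k-l) * (G k l (m+1) : ℤ) = ((l:ℤ)-m) * (G k l m : ℤ) := by
  have hml : m ≤ l := hm.le
  have hmkl : l ≤ m + k := by omega
  have h1 : l.choose (m+1) * (m+1) = l.choose m * (l - m) := Nat.choose_succ_right_eq l m
  have e : l - (m+1) + 1 = l - m := by omega
  have h2 := Nat.choose_succ_right_eq (k-1) (l - (m+1))
  rw [e] at h2
  have e2 : k - 1 - (l - (m+1)) = m + k - l := by omega
  rw [e2] at h2
  have h3 : (l - m).factorial = (l - m) * (l - (m+1)).factorial := by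
    rw [← e, Nat.factorial_succ, e]
  zify [hml, hmkl] at h1 h2 h3
  unfold G
  push_cast
  linear_combination ((k:ℤ) * ((m:ℤ)+(k:ℤ)-(l:ℤ)) * ((k-1).choose (l - (m+1)) : ℤ) * ((l - (m+1)).factorial : ℤ)) * h1
    - ((k:ℤ) * ((l:ℤ)-(m:ℤ)) * (l.choose m : ℤ) * ((l - (m+1)).factorial : ℤ)) * h2
    - ((k:ℤ) * ((l:ℤ)-(m:ℤ)) * (l.choose m : ℤ) * ((k-1).choose (l-m) : ℤ)) * h3

lemma up (k l m : ℕ) (hk : 1 ≤ k) (hlk : l ≤ k) (hm : m < l) (hadm : l + 1 ≤ m + k)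
    (hq : ((m:ℤ)+1) * ((m:ℤ)+k-l) ≤ (l:ℤ) - m) :
    G k l m ≤ G k l (m+1) := by
  have key := keyZ k l m hk hlk hm
  have hA : (1:ℤ) ≤ ((m:ℤ)+1) * ((m:ℤ)+k-l) := by
    have : (1:ℤ) ≤ (m:ℤ)+k-l := by
      have := hadm; push_cast; omega
    nlinarith [Int.ofNat_nonneg m]
  have hG : (0:ℤ) ≤ (G k l m : ℤ) := Int.ofNat_nonneg _
  have : ((m:ℤ)+1) * ((m:ℤ)+k-l) * (G k l m : ℤ) ≤ ((m:ℤ)+1) * ((m:ℤ)+k-l) * (G k l (m+1) : ℤ) := by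
    rw [key]; exact mul_le_mul_of_nonneg_right hq hG
  have := le_of_mul_le_mul_left this (by linarith)
  exact_mod_cast this

lemma down (k l m : ℕ) (hk : 1 ≤ k) (hlk : l ≤ k) (hm : m < l) (hadm : l + 1 ≤ m + k)
    (hq : (l:ℤ) - m ≤ ((m:ℤ)+1) * ((m:ℤ)+k-l)) :
    G k l (m+1) ≤ G k l m := by
  have key := keyZ k l m hk hlk hm
  have hA : (1:ℤ) ≤ ((m:ℤ)+1) * ((m:ℤ)+k-l) := by
    have : (1:ℤ) ≤ (m:ℤ)+k-l := by
      have := hadm; push_cast; omega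
    nlinarith [Int.ofNat_nonneg m]
  have hG : (0:ℤ) ≤ (G k l m : ℤ) := Int.ofNat_nonneg _
  have : ((m:ℤ)+1) * ((m:ℤ)+k-l) * (G k l (m+1) : ℤ) ≤ ((m:ℤ)+1) * ((m:ℤ)+k-l) * (G k l m : ℤ) := by
    rw [key]; exact mul_le_mul_of_nonneg_right hq hG
  have := le_of_mul_le_mul_left this (by linarith)
  exact_mod_cast this

/-- For `0 ≤ k - l ≤ 2`, the value `m_opt = ⌈(√D + l - k - 2)/2⌉`,
`D = (k - l)² + 4(l + 1)`, maximizes `G k l ·` over the admissible range,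
provided it lies in the admissible range. -/
theorem stmt9 (k l : ℕ) (hk : 1 ≤ k) (hlk : l ≤ k) (hkl : k ≤ l + 2)
    (mopt : ℕ)
    (hmopt : (mopt : ℤ) =
      ⌈(Real.sqrt (((k : ℝ) - l) ^ 2 + 4 * ((l : ℝ) + 1)) + l - k - 2) / 2⌉)
    (h1 : mopt ≤ l) (h2 : l + 1 ≤ mopt + k) :
    ∀ m : ℕ, m ≤ l → l + 1 ≤ m + k → G k l m ≤ G k l mopt := by
  set D : ℝ := ((k : ℝ) - l) ^ 2 + 4 * ((l : ℝ) + 1) with hDdef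
  set x : ℝ := (Real.sqrt D + l - k - 2) / 2 with hxdef
  have hD : (0:ℝ) ≤ D := by positivity
  have hlkR : (l:ℝ) ≤ k := by exact_mod_cast hlk
  have hle : x ≤ (mopt:ℝ) := by
    have := Int.le_ceil x
    rw [← hmopt] at this
    exact_mod_cast this
  have hlt : (mopt:ℝ) < x + 1 := by
    have := Int.ceil_lt_add_one x
    rw [← hmopt] at this
    exact_mod_cast this
  -- hc1
  have hsq : Real.sqrt D ≤ 2*(mopt:ℝ) + k - l + 2 := by
    rw [hxdef] at hle; linarith
  have hc1R : D ≤ (2*(mopt:ℝ) + k - l + 2)^2 := by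
    calc D = (Real.sqrt D)^2 := (Real.sq_sqrt hD).symm
    _ ≤ (2*(mopt:ℝ) + k - l + 2)^2 := by
        apply pow_le_pow_left₀ (Real.sqrt_nonneg _) hsq
  have hc1 : ((k:ℤ)-l)^2 + 4*((l:ℤ)+1) ≤ (2*(mopt:ℤ) + k - l + 2)^2 := by
    rw [← @Int.cast_le ℝ]
    push_cast
    rw [hDdef] at hc1R
    linarith [hc1R]
  -- hc2
  have hsq2 : 2*(mopt:ℝ) + k - l < Real.sqrt D := by
    rw [hxdef] at hlt; linarith
  have ht0 : (0:ℝ) ≤ 2*(mopt:ℝ) + k - l := by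
    have : (0:ℝ) ≤ (mopt:ℝ) := Nat.cast_nonneg _
    linarith
  have hc2R : (2*(mopt:ℝ) + k - l)^2 < D := by
    calc (2*(mopt:ℝ) + k - l)^2 < (Real.sqrt D)^2 := by
          apply pow_lt_pow_left₀ hsq2 ht0; norm_num
    _ = D := Real.sq_sqrt hD
  have hc2 : (2*(mopt:ℤ) + k - l)^2 < ((k:ℤ)-l)^2 + 4*((l:ℤ)+1) := by
    rw [← @Int.cast_lt ℝ]
    push_cast
    rw [hDdef] at hc2R
    linarith [hc2R]
  have hlkZ : (l:ℤ) ≤ k := by exact_mod_cast hlk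
  have HA : ∀ m : ℕ, mopt ≤ m → (l:ℤ) - m ≤ ((m:ℤ)+1) * ((m:ℤ)+k-l) := by
    intro m hm
    have hmZ : (mopt:ℤ) ≤ m := by exact_mod_cast hm
    have h0 : (0:ℤ) ≤ mopt := Int.ofNat_nonneg _
    nlinarith [hc1, mul_nonneg (sub_nonneg.2 hmZ) (sub_nonneg.2 hlkZ),
      mul_nonneg (sub_nonneg.2 hmZ) (add_nonneg (Int.ofNat_nonneg m) (Int.ofNat_nonneg mopt)),
      mul_nonneg (sub_nonneg.2 hmZ) h0]
  have HB : ∀ m : ℕ, m < mopt → ((m:ℤ)+1) * ((m:ℤ)+k-l) < (l:ℤ) - m := by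
    intro m hm
    have hmZ : (m:ℤ) + 1 ≤ mopt := by exact_mod_cast hm
    have h0 : (0:ℤ) ≤ m := Int.ofNat_nonneg _
    have d1 : (0:ℤ) ≤ 2*(mopt:ℤ) - 2*m - 2 := by linarith
    have s1 : (0:ℤ) ≤ (2*(mopt:ℤ)+k-l) + (2*(m:ℤ)+k-l+2) := by linarith
    nlinarith [hc2, mul_nonneg d1 s1]
  have inc : ∀ d m : ℕ, m + d = mopt → l + 1 ≤ m + k → G k l m ≤ G k l mopt := by
    intro d
    induction d with
    | zero => intro m hm _; rw [show m = mopt by omega]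
    | succ d ih =>
        intro m hm hadm
        have hml : m < l := by omega
        have step : G k l m ≤ G k l (m+1) :=
          up k l m hk hlk hml hadm (le_of_lt (HB m (by omega)))
        exact le_trans step (ih (m+1) (by omega) (by omega))
  have dec : ∀ d m : ℕ, mopt + d = m → m ≤ l → G k l m ≤ G k l mopt := by
    intro d
    induction d with
    | zero => intro m hm _; rw [show m = mopt by omega]
    | succ d ih =>
        intro m hm hml
        have hm' : m = (mopt + d) + 1 := by omega
        have hlt' : mopt + d < l := by omega
        have step : G k l ((mopt+d)+1) ≤ G k l (mopt+d) :=
          down k l (mopt+d) hk hlk hlt' (by omega) (HA (mopt+d) (by omega))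
        rw [hm']
        exact le_trans step (ih (mopt+d) rfl (by omega))
  intro m hml hadm
  rcases le_or_gt m mopt with h | h
  · exact inc (mopt - m) m (by omega) hadm
  · exact dec (m - mopt) m (by omega) hml
end

section
/- For n ≥ 5, F(n) < max_{k=1}^{n} k^{n−k+1} + 1; i.e., the 2PerFA-to-1DFA bound is strictly smaller than the sweeping-2DFA-to-1DFA bound. -/
/-- The sweeping-2DFA-to-1DFA bound `φ(n) = max_{k=1}^n k^{n-k+1} + 1`. -/
def phi (n : ℕ) : ℕ := (Finset.Icc 1 n).sup (fun k => k ^ (n - k + 1)) + 1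

lemma binom_term_le (l d c : ℕ) (hd : d ≤ l) : l.choose d * c ^ d ≤ (c + 1) ^ l := by
  rw [add_pow c 1 l]
  calc l.choose d * c ^ d = c ^ d * 1 ^ (l - d) * l.choose d := by ring
    _ ≤ ∑ k ∈ Finset.range (l + 1), c ^ k * 1 ^ (l - k) * l.choose k :=
      Finset.single_le_sum (f := fun k => c ^ k * 1 ^ (l - k) * l.choose k) (fun i _ => Nat.zero_le _)
        (Finset.mem_range.mpr (Nat.lt_succ_of_le hd))

lemma G_le (k l m : ℕ) (hm : m ≤ l) : G k l m ≤ k ^ (l + 1) := by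
  rcases Nat.eq_zero_or_pos k with hk | hk
  · simp [G, hk]
  set d := l - m with hd
  have hdl : d ≤ l := Nat.sub_le _ _
  have h1 : (k - 1).choose d * d.factorial ≤ (k - 1) ^ d := by
    rw [mul_comm, ← Nat.descFactorial_eq_factorial_mul_choose]
    exact Nat.descFactorial_le_pow _ _
  have h2 : l.choose m = l.choose d := by
    rw [hd]; exact (Nat.choose_symm hm).symm
  have h3 : l.choose d * ((k - 1) ^ d) ≤ k ^ l := by
    have := binom_term_le l d (k - 1) hdl
    rwa [Nat.sub_add_cancel hk] at this
  calc G k l m = k * (l.choose d * ((k - 1).choose d * d.factorial)) := by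
        rw [G, h2]; ring
    _ ≤ k * (l.choose d * (k - 1) ^ d) :=
        Nat.mul_le_mul_left _ (Nat.mul_le_mul_left _ h1)
    _ ≤ k * k ^ l := Nat.mul_le_mul_left _ h3
    _ = k ^ (l + 1) := by ring

/-- For `n ≥ 5`, `F n` is strictly smaller than the sweeping bound `φ n`. -/
theorem stmt17 (n : ℕ) (hn : 5 ≤ n) : F n < phi n := by
  rw [phi, Nat.lt_succ_iff]
  apply Finset.sup_le
  rintro ⟨k, l, m⟩ ht
  dsimp only
  split_ifs with h
  · obtain ⟨hkl, hk1, hml, -⟩ := h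
    have hkn : k ≤ n := hkl ▸ Nat.le_add_right _ _
    have hln : l = n - k := by omega
    calc G k l m ≤ k ^ (l + 1) := G_le k l m hml
      _ = k ^ (n - k + 1) := by rw [hln]
      _ ≤ _ := Finset.le_sup (f := fun j => j ^ (n - j + 1)) (Finset.mem_Icc.mpr ⟨hk1, hkn⟩)
  · exact Nat.zero_le _
end

section
/- For every n ≥ 1, φ(n) = max_{k=1}^n k^{n−k+1} + 1 ≤ n(n^n − (n−1)^n) + 1, with strict inequality for n ≥ 3. -/
lemma sup_le_pow (n : ℕ) (hn : 1 ≤ n) :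
    (Finset.Icc 1 n).sup (fun k => k ^ (n - k + 1)) ≤ n ^ n := by
  apply Finset.sup_le
  intro k hk
  simp only [Finset.mem_Icc] at hk
  calc k ^ (n - k + 1) ≤ n ^ (n - k + 1) := Nat.pow_le_pow_left hk.2 _
    _ ≤ n ^ n := Nat.pow_le_pow_right hn (by omega)

lemma key_le (m : ℕ) : m ^ (m + 1) + (m + 1) ^ m ≤ (m + 1) ^ (m + 1) := by
  have h1 : m ^ m ≤ (m + 1) ^ m := Nat.pow_le_pow_left (by omega) m
  have h2 : m ^ (m + 1) = m ^ m * m := pow_succ m m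
  have h3 : (m + 1) ^ (m + 1) = (m + 1) ^ m * m + (m + 1) ^ m := by
    rw [pow_succ]; ring
  nlinarith

lemma key_lt (m : ℕ) (hm : 1 ≤ m) :
    m ^ (m + 1) + (m + 1) ^ m < (m + 1) ^ (m + 1) := by
  have h1 : m ^ m < (m + 1) ^ m := Nat.pow_lt_pow_left (by omega) (by omega)
  have h2 : m ^ (m + 1) = m ^ m * m := pow_succ m m
  have h3 : (m + 1) ^ (m + 1) = (m + 1) ^ m * m + (m + 1) ^ m := by
    rw [pow_succ]; ring
  nlinarith

lemma main_le (n : ℕ) (hn : 1 ≤ n) : n ^ n ≤ n * (n ^ n - (n - 1) ^ n) := by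
  obtain ⟨m, rfl⟩ : ∃ m, n = m + 1 := ⟨n - 1, by omega⟩
  have hk := key_le m
  have h4 : (m + 1) ^ m ≤ (m + 1) ^ (m + 1) - m ^ (m + 1) := by omega
  have h5 : (m + 1) ^ (m + 1) = (m + 1) * (m + 1) ^ m := by
    rw [pow_succ]; ring
  calc (m + 1) ^ (m + 1) = (m + 1) * (m + 1) ^ m := h5
    _ ≤ (m + 1) * ((m + 1) ^ (m + 1) - m ^ (m + 1)) :=
        Nat.mul_le_mul_left _ h4
    _ = (m + 1) * ((m + 1) ^ (m + 1) - (m + 1 - 1) ^ (m + 1)) := by norm_num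

lemma main_lt (n : ℕ) (hn : 2 ≤ n) : n ^ n < n * (n ^ n - (n - 1) ^ n) := by
  obtain ⟨m, rfl⟩ : ∃ m, n = m + 1 := ⟨n - 1, by omega⟩
  have hk := key_lt m (by omega)
  have h4 : (m + 1) ^ m < (m + 1) ^ (m + 1) - m ^ (m + 1) := by omega
  have h5 : (m + 1) ^ (m + 1) = (m + 1) * (m + 1) ^ m := by
    rw [pow_succ]; ring
  calc (m + 1) ^ (m + 1) = (m + 1) * (m + 1) ^ m := h5
    _ < (m + 1) * ((m + 1) ^ (m + 1) - m ^ (m + 1)) := by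
        exact Nat.mul_lt_mul_of_le_of_lt (le_refl _) h4 (by omega)
    _ = (m + 1) * ((m + 1) ^ (m + 1) - (m + 1 - 1) ^ (m + 1)) := by norm_num

/-- `φ(n) ≤ n(n^n − (n−1)^n) + 1` for `n ≥ 1`, with strict inequality for `n ≥ 3`. -/
theorem stmt18 :
    (∀ n : ℕ, 1 ≤ n → phi n ≤ n * (n ^ n - (n - 1) ^ n) + 1) ∧
      (∀ n : ℕ, 3 ≤ n → phi n < n * (n ^ n - (n - 1) ^ n) + 1) := by
  constructor
  · intro n hn
    have := (sup_le_pow n hn).trans (main_le n hn)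
    unfold phi; omega
  · intro n hn
    have := lt_of_le_of_lt (sup_le_pow n (by omega)) (main_lt n (by omega))
    unfold phi; omega
end

section
/- For n ≥ 8 and the optimal triple k = ⌊(n+2)/2⌋, ℓ = ⌈(n−2)/2⌉, m = ⌈(√(3+2n) − 3)/2⌉ if n is odd and m = ⌈(√(4+2n) − 4)/2⌉ if n is even, the constraints k ≥ 1, m ≤ ℓ, and m ≥ ℓ − k + 1 all hold; in particular m ≥ 1. -/
/-- For `n ≥ 8`, the optimal triple `k = ⌊(n+2)/2⌋`, `ℓ = ⌈(n-2)/2⌉`, and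
`m = ⌈(√(3+2n) − 3)/2⌉` (n odd) or `m = ⌈(√(4+2n) − 4)/2⌉` (n even) is
admissible: `k ≥ 1`, `m ≤ ℓ`, `m ≥ ℓ − k + 1`; moreover `m ≥ 1`. -/
theorem stmt19 (n : ℕ) (hn : 8 ≤ n)
    (k l m : ℕ) (hkdef : k = (n + 2) / 2) (hldef : l = (n - 1) / 2)
    (hmdef : (m : ℤ) = if Odd n then ⌈(Real.sqrt (3 + 2 * (n : ℝ)) - 3) / 2⌉
      else ⌈(Real.sqrt (4 + 2 * (n : ℝ)) - 4) / 2⌉) :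
    1 ≤ k ∧ m ≤ l ∧ l + 1 ≤ m + k ∧ 1 ≤ m := by
  have hnR : (8 : ℝ) ≤ (n : ℝ) := by exact_mod_cast hn
  have hlR : ((l : ℝ)) = ((l : ℕ) : ℝ) := rfl
  have hm1 : (1 : ℤ) ≤ (m : ℤ) := by
    rw [hmdef]
    split_ifs with h
    · have h3 : (3 : ℝ) < Real.sqrt (3 + 2 * n) := by
        rw [show (3:ℝ) + 2*n = ((3 + 2*n : ℝ)) from rfl]
        have := (Real.lt_sqrt (by norm_num : (0:ℝ) ≤ 3)).mpr
          (show (3:ℝ)^2 < 3 + 2*n by nlinarith)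
        exact this
      have : (0 : ℝ) < (Real.sqrt (3 + 2 * n) - 3) / 2 := by linarith
      exact Int.ceil_pos.mpr this
    · have h4 : (4 : ℝ) < Real.sqrt (4 + 2 * n) := by
        exact (Real.lt_sqrt (by norm_num : (0:ℝ) ≤ 4)).mpr
          (show (4:ℝ)^2 < 4 + 2*n by nlinarith)
      have : (0 : ℝ) < (Real.sqrt (4 + 2 * n) - 4) / 2 := by linarith
      exact Int.ceil_pos.mpr this
  have hml : (m : ℤ) ≤ (l : ℤ) := by
    have hlb : (n : ℝ) - 2 ≤ 2 * (l : ℝ) := by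
      have h2 : n ≤ 2 * l + 2 := by omega
      have : (n : ℝ) ≤ 2 * (l : ℝ) + 2 := by exact_mod_cast h2
      linarith
    rw [hmdef]
    split_ifs with h
    · rw [Int.ceil_le]
      have hs : Real.sqrt (3 + 2 * n) ≤ (n : ℝ) := by
        rw [Real.sqrt_le_iff]
        constructor
        · linarith
        · nlinarith
      push_cast
      linarith
    · rw [Int.ceil_le]
      have hs : Real.sqrt (4 + 2 * n) ≤ (n : ℝ) := by
        rw [Real.sqrt_le_iff]
        constructor
        · linarith
        · nlinarith
      push_cast
      linarith
  have hm1' : 1 ≤ m := by exact_mod_cast hm1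
  have hml' : m ≤ l := by exact_mod_cast hml
  refine ⟨by omega, hml', by omega, hm1'⟩
end
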